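/- Barycentric refinement estimate: let G₁ be the Barycentric refinement of G and let d be the maximal vertex degree of G. If G has at least one vertex, then every eigenvalue μ of the Kirchhoff Laplacian of G₁ satisfies μ ≤ (d + 3) − 1/(d + 3). -/

import Mathlib

/-! The Laplacian quadratic form of `G₁` is `∑_{u ∈ f} (x_u - x_f)²`. Bounding each term by
`(x - y)² ≤ (1 + t) x² + (1 + t⁻¹) y²`, a vertex `u` of `G` collects weight at most `d (1 + t)`
and an edge `f`, having two endpoints, at most `2 (1 + t⁻¹)`; so every eigenvalue is at most the
larger of the two. For `t = 4 / (2d + 1)` this is `d + 5/2 ≤ d + 3 - 1/(d + 3)`. -/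

open Matrix

variable {V : Type*} [Fintype V] [DecidableEq V]

/-- The simplices of the 1-dimensional simplicial complex of a graph: vertices and edges. -/
abbrev Simplex (G : SimpleGraph V) [DecidableRel G.Adj] := V ⊕ G.edgeSet

variable (G : SimpleGraph V) [DecidableRel G.Adj]

/-- The Barycentric refinement of `G`: vertices and edges of `G` are the new vertices,
and a vertex is joined to each edge containing it. -/
def bary : SimpleGraph (Simplex G) where
  Adj x y :=
    match x, y with
    | Sum.inl u, Sum.inr f => u ∈ (f : Sym2 V)
    | Sum.inr f, Sum.inl u => u ∈ (f : Sym2 V)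
    | _, _ => False
  symm := by
    constructor
    rintro (u | f) (w | g) h
    · exact h.elim
    · exact h
    · exact h
    · exact h.elim
  loopless := by
    constructor
    rintro (u | f) h
    · exact h.elim
    · exact h.elim

instance : DecidableRel (bary G).Adj := fun x y =>
  match x, y with
  | Sum.inl u, Sum.inr f => inferInstanceAs (Decidable (u ∈ (f : Sym2 V)))
  | Sum.inr f, Sum.inl u => inferInstanceAs (Decidable (u ∈ (f : Sym2 V)))
  | Sum.inl _, Sum.inl _ => inferInstanceAs (Decidable False)
  | Sum.inr _, Sum.inr _ => inferInstanceAs (Decidable False)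

/-- The Kirchhoff Laplacian of the Barycentric refinement. -/
def kirchhoffBary : Matrix (Simplex G) (Simplex G) ℝ :=
  Matrix.diagonal (fun x => ((bary G).degree x : ℝ)) - (bary G).adjMatrix ℝ


open Finset

theorem sq_sub_le_one_add_mul_sq_add {t : ℝ} (ht : 0 < t) (x y : ℝ) :
    (x - y) ^ 2 ≤ (1 + t) * x ^ 2 + (1 + t⁻¹) * y ^ 2 := by
  have key : 0 ≤ t⁻¹ * (t * x + y) ^ 2 := by positivity
  have expand : t⁻¹ * (t * x + y) ^ 2 = t * x ^ 2 + 2 * x * y + t⁻¹ * y ^ 2 := by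
    field_simp
    ring
  nlinarith

theorem Matrix.le_of_mulVec_eq_smul {n : Type*} [Fintype n] {A : Matrix n n ℝ} {M μ : ℝ}
    (hA : ∀ x, x ⬝ᵥ (A *ᵥ x) ≤ M * (x ⬝ᵥ x)) {w : n → ℝ} (hw : w ≠ 0)
    (h : A *ᵥ w = μ • w) : μ ≤ M := by
  have hpos : 0 < w ⬝ᵥ w := by
    obtain ⟨i, hi⟩ := Function.ne_iff.mp hw
    exact sum_pos' (fun j _ => mul_self_nonneg _) ⟨i, mem_univ i, mul_self_pos.mpr hi⟩
  have := hA w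
  rw [h, dotProduct_smul, smul_eq_mul] at this
  exact le_of_mul_le_mul_right this hpos

namespace SimpleGraph

variable {S : Type*} [Fintype S] (H : SimpleGraph S) [DecidableRel H.Adj]

theorem sum_sum_ite_adj (f : S → ℝ) :
    ∑ i, ∑ j, (if H.Adj i j then f i else 0) = ∑ i, H.degree i * f i := by
  simp_rw [H.degree_eq_sum_if_adj (R := ℝ), sum_mul, ite_mul, one_mul, zero_mul]

theorem dotProduct_lapMatrix_mulVec_le [DecidableEq S] (c : S → ℝ) {M : ℝ}
    (hc : ∀ i j, H.Adj i j → ∀ x y : ℝ, (x - y) ^ 2 ≤ c i * x ^ 2 + c j * y ^ 2)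
    (hM : ∀ i, H.degree i * c i ≤ M) (x : S → ℝ) :
    x ⬝ᵥ (H.lapMatrix ℝ *ᵥ x) ≤ M * (x ⬝ᵥ x) := by
  set q : S → ℝ := fun i => c i * x i ^ 2
  have hsymm : ∑ i, ∑ j, (if H.Adj i j then q j else 0) = ∑ i, ∑ j, if H.Adj i j then q i else 0 := by
    rw [sum_comm]
    exact sum_congr rfl fun i _ => sum_congr rfl fun j _ => if_congr (H.adj_comm j i) rfl rfl
  calc x ⬝ᵥ (H.lapMatrix ℝ *ᵥ x)
      = (∑ i, ∑ j, if H.Adj i j then (x i - x j) ^ 2 else 0) / 2 := by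
        rw [← toLinearMap₂'_apply', lapMatrix_toLinearMap₂']
    _ ≤ (∑ i, ∑ j, if H.Adj i j then q i + q j else 0) / 2 := by
        gcongr with i _ j _
        split_ifs with hij
        exacts [hc i j hij _ _, le_rfl]
    _ = ∑ i, H.degree i * q i := by
        simp_rw [ite_add_zero, sum_add_distrib, hsymm, sum_sum_ite_adj]
        ring
    _ ≤ ∑ i, M * x i ^ 2 := by
        refine sum_le_sum fun i _ => ?_
        rw [← mul_assoc]
        exact mul_le_mul_of_nonneg_right (hM i) (sq_nonneg _)
    _ = M * (x ⬝ᵥ x) := by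
        simp only [dotProduct, mul_sum, sq]

end SimpleGraph

theorem bary_degree_inl_le (u : V) : (bary G).degree (Sum.inl u) ≤ G.degree u := by
  rw [← G.card_incidenceFinset_eq_degree, SimpleGraph.degree]
  refine card_le_card_of_injOn (Sum.elim (fun _ => s(u, u)) (↑)) ?_ ?_
  · rintro (v | f) hf
    · exact ((SimpleGraph.mem_neighborFinset _ _ _).mp hf).elim
    · exact (G.mem_incidenceFinset _ _).mpr ⟨f.2, (SimpleGraph.mem_neighborFinset _ _ _).mp hf⟩
  · rintro (v | f) hf (w | g) hg hfg
    · exact ((SimpleGraph.mem_neighborFinset _ _ _).mp hf).elim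
    · exact ((SimpleGraph.mem_neighborFinset _ _ _).mp hf).elim
    · exact ((SimpleGraph.mem_neighborFinset _ _ _).mp hg).elim
    · exact congrArg Sum.inr (Subtype.ext hfg)

theorem bary_degree_inr_le_two (f : G.edgeSet) : (bary G).degree (Sum.inr f) ≤ 2 := by
  obtain ⟨e, he⟩ := f
  induction e using Sym2.ind with
  | _ a b =>
    have hsub : (bary G).neighborFinset (Sum.inr ⟨s(a, b), he⟩) ⊆ {Sum.inl a, Sum.inl b} := by
      rintro (u | g) hx
      · rcases Sym2.mem_iff.mp ((SimpleGraph.mem_neighborFinset _ _ _).mp hx) with rfl | rfl <;> simp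
      · exact ((SimpleGraph.mem_neighborFinset _ _ _).mp hx).elim
    exact (card_le_card hsub).trans card_le_two

variable {G} in
noncomputable def baryWeight (t : ℝ) : Simplex G → ℝ :=
  Sum.elim (fun _ => 1 + t) fun _ => 1 + t⁻¹

omit [Fintype V] [DecidableEq V] in
theorem sq_sub_le_baryWeight {t : ℝ} (ht : 0 < t) :
    ∀ i j, (bary G).Adj i j → ∀ x y : ℝ, (x - y) ^ 2 ≤ baryWeight t i * x ^ 2 + baryWeight t j * y ^ 2
  | .inl _, .inr _, _, x, y => sq_sub_le_one_add_mul_sq_add ht x y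
  | .inr _, .inl _, _, x, y => calc
      (x - y) ^ 2 = (y - x) ^ 2 := by ring
      _ ≤ (1 + t) * y ^ 2 + (1 + t⁻¹) * x ^ 2 := sq_sub_le_one_add_mul_sq_add ht y x
      _ = _ := add_comm _ _

theorem degree_mul_baryWeight_le {t : ℝ} (ht : 0 < t) (i : Simplex G) :
    (bary G).degree i * baryWeight t i ≤ max (G.maxDegree * (1 + t)) (2 * (1 + t⁻¹)) := by
  rcases i with u | f
  · refine le_max_of_le_left (mul_le_mul_of_nonneg_right ?_ (by simp [baryWeight]; linarith))
    exact Nat.cast_le.mpr ((bary_degree_inl_le G u).trans (G.degree_le_maxDegree u))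
  · refine le_max_of_le_right (mul_le_mul_of_nonneg_right ?_ (by simp [baryWeight]; positivity))
    exact_mod_cast bary_degree_inr_le_two G f

theorem le_of_mulVec_kirchhoffBary_eq_smul {t : ℝ} (ht : 0 < t) {μ : ℝ} {w : Simplex G → ℝ}
    (hw : w ≠ 0) (h : kirchhoffBary G *ᵥ w = μ • w) :
    μ ≤ max (G.maxDegree * (1 + t)) (2 * (1 + t⁻¹)) :=
  Matrix.le_of_mulVec_eq_smul ((bary G).dotProduct_lapMatrix_mulVec_le _
    (sq_sub_le_baryWeight G ht) (degree_mul_baryWeight_le G ht)) hw h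

theorem barycentric_estimate (μ : ℝ)
    (hμ : ∃ w : Simplex G → ℝ, w ≠ 0 ∧ (kirchhoffBary G).mulVec w = μ • w) :
    μ ≤ ((G.maxDegree : ℝ) + 3) - 1 / ((G.maxDegree : ℝ) + 3) := by
  obtain ⟨w, hw, hμw⟩ := hμ
  set d : ℝ := (G.maxDegree : ℝ)
  have hd : 0 ≤ d := Nat.cast_nonneg _
  -- `t` makes the edge bound `2 (1 + t⁻¹)` equal to `d + 5/2`, which dominates `d (1 + t)`.
  set t : ℝ := 4 / (2 * d + 1)
  have ht : 0 < t := by positivity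
  have hV : d * (1 + t) ≤ d + 5 / 2 := by
    rw [mul_one_add, add_le_add_iff_left, mul_div_assoc', div_le_iff₀ (by positivity)]
    nlinarith
  have hE : 2 * (1 + t⁻¹) = d + 5 / 2 := by
    rw [inv_div]; ring
  have hμ : μ ≤ d + 5 / 2 :=
    (le_of_mulVec_kirchhoffBary_eq_smul G ht hw hμw).trans (max_le hV hE.le)
  have : 1 / (d + 3) ≤ 1 / 2 := one_div_le_one_div_of_le two_pos (by linarith)
  linarith
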